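/- arXiv:2402.01497 — 3 statements merged into one kernel-verified Lean document; each statement's English description precedes it below -/
import Mathlib

section
/- With H₁ and H₂ as defined, H₁(1/2, 1/2, 1/2, 1/2) = ∏_{p odd prime} (1 − 1/p)⁷ (1 + 7/p − 2/p² + 3/p³ − 1/p⁴) and H₂(1/2, 1/2, 1/2, 1/2) = ∏_{p odd prime} [ (1 − 1/p)^{10} / (1 + 1/p) ] · [ ((1 + p^{−1/2})^{−4} + (1 − p^{−1/2})^{−4})/2 + 1/p ], all products converging absolutely. -/
open scoped Classical

noncomputable section

/-- The combinatorial factor `C_p(u)`. -/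
def Cp (p : ℕ) (u : Fin 4 → ℂ) : ℂ :=
  (∏ i : Fin 4, ∏ j : Fin 4, if i < j then 1 - (p : ℂ) ^ (-(u i + u j)) else 1) *
    ∑ A : Finset (Fin 4), if Even A.card then ∏ i ∈ A, (p : ℂ) ^ (-(u i)) else 0

/-- The Euler factor at `p` of the product defining `H_ℓ`. -/
def Hfactor (g : ℕ → ℂ) (u : Fin 4 → ℂ) (p : ℕ) : ℂ :=
  (1 - g p) * (∏ i : Fin 4, ∏ j : Fin 4, if i ≤ j then 1 - (p : ℂ) ^ (-(u i + u j)) else 1) +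
    g p * Cp p u

/-- The Euler product over odd primes. -/
def HEuler (g : ℕ → ℂ) (u : Fin 4 → ℂ) : ℂ :=
  ∏' p : {p : ℕ // p.Prime ∧ p ≠ 2}, Hfactor g u p.1

/-- `g₁(p) = 1 - 1/p`. -/
def g1fun (p : ℕ) : ℂ := 1 - 1 / (p : ℂ)

/-- `g₂(p) = 1 - 1/(p+1)`. -/
def g2fun (p : ℕ) : ℂ := 1 - 1 / ((p : ℂ) + 1)

/-- The function `H₁`. -/
def H1 (u : Fin 4 → ℂ) : ℂ := HEuler g1fun u

/-- The function `H₂`. -/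
def H2 (u : Fin 4 → ℂ) : ℂ := HEuler g2fun u

/-! ### Auxiliary lemmas -/

lemma sum_even_eval (c : ℂ) : (∑ A : Finset (Fin 4), if Even A.card then ∏ _i ∈ A, c else 0)
    = 1 + 6*c^2 + c^4 := by
  have : ∀ A : Finset (Fin 4), (if Even A.card then ∏ _i ∈ A, c else 0)
      = (if Even A.card then c ^ A.card else 0) := by
    intro A; simp [Finset.prod_const]
  rw [Finset.sum_congr rfl (fun A _ => this A), ← Finset.powerset_univ,
    Finset.sum_powerset_apply_card (fun k => if Even k then c ^ k else 0)]
  simp [Finset.sum_range_succ, Nat.even_iff]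
  norm_num [Nat.choose]

lemma prod_lt_eval (t : ℂ) :
    (∏ i : Fin 4, ∏ j : Fin 4, if i < j then 1 - t else 1) = (1 - t)^6 := by
  simp [Fin.prod_univ_four]; ring

lemma prod_le_eval (t : ℂ) :
    (∏ i : Fin 4, ∏ j : Fin 4, if i ≤ j then 1 - t else 1) = (1 - t)^10 := by
  simp [Fin.prod_univ_four]; ring

lemma cpow_half_sq {p : ℕ} (hp : 0 < p) :
    ((p : ℂ) ^ (-((1:ℂ)/2)))^2 = (p : ℂ)⁻¹ := by
  have h0 : (p:ℂ) ≠ 0 := by exact_mod_cast hp.ne'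
  rw [sq, ← Complex.cpow_add _ _ h0]
  norm_num [Complex.cpow_neg_one]

lemma Hfactor_eval (g : ℕ → ℂ) {p : ℕ} (hp : 0 < p) :
    Hfactor g (fun _ => 1/2) p =
      (1 - g p) * (1 - (p:ℂ)⁻¹)^10 +
        g p * ((1 - (p:ℂ)⁻¹)^6 * (1 + 6*(p:ℂ)⁻¹ + ((p:ℂ)⁻¹)^2)) := by
  have h1 : (-(((1:ℂ)/2) + 1/2)) = -1 := by norm_num
  have hs2 := cpow_half_sq hp
  unfold Hfactor Cp
  simp only [h1, Complex.cpow_neg_one, prod_le_eval, prod_lt_eval, sum_even_eval]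
  have h4 : ((p:ℂ) ^ (-((1:ℂ)/2)))^4 = ((p:ℂ)⁻¹)^2 := by rw [← hs2]; ring
  rw [h4, hs2]

lemma target1_eval {p : ℕ} (hp : 3 ≤ p) :
    Hfactor g1fun (fun _ => 1/2) p =
      (1 - 1 / (p : ℂ)) ^ 7 *
        (1 + 7 / (p : ℂ) - 2 / (p : ℂ) ^ 2 + 3 / (p : ℂ) ^ 3 - 1 / (p : ℂ) ^ 4) := by
  rw [Hfactor_eval g1fun (by omega)]
  unfold g1fun
  simp only [one_div, div_eq_mul_inv, ← inv_pow]
  ring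

lemma R2_eval {p : ℕ} (hp : 3 ≤ p) :
    Hfactor g2fun (fun _ => 1/2) p =
      ((p:ℂ)⁻¹ * (1-(p:ℂ)⁻¹)^10 + (1-(p:ℂ)⁻¹)^6 * (1+6*(p:ℂ)⁻¹+((p:ℂ)⁻¹)^2)) / (1+(p:ℂ)⁻¹) := by
  have h0 : (p:ℂ) ≠ 0 := Nat.cast_ne_zero.mpr (by omega)
  have hy : (p:ℂ) * (p:ℂ)⁻¹ = 1 := mul_inv_cancel₀ h0
  have h1 : (p:ℂ) + 1 ≠ 0 := by
    have : ((p+1:ℕ):ℂ) ≠ 0 := Nat.cast_ne_zero.mpr (by omega)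
    push_cast at this; exact this
  have h2 : 1 + (p:ℂ)⁻¹ ≠ 0 := by
    intro h
    apply h1
    have := congrArg (fun z => (p:ℂ) * z) h
    simp only [mul_add, mul_one, hy, mul_zero] at this
    exact this
  have ha : 1 - g2fun p = (p:ℂ)⁻¹/(1+(p:ℂ)⁻¹) := by
    unfold g2fun
    rw [sub_sub_cancel, div_eq_div_iff h1 h2]
    linear_combination -hy
  have hb : g2fun p = 1/(1+(p:ℂ)⁻¹) := by
    have hc : g2fun p = (p:ℂ)/((p:ℂ)+1) := by unfold g2fun; field_simp; ring
    rw [hc, div_eq_div_iff h1 h2]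
    linear_combination hy
  rw [Hfactor_eval g2fun (by omega), ha, hb]
  ring

lemma target2_eval {p : ℕ} (hp : 3 ≤ p) :
    ((p:ℂ)⁻¹ * (1-(p:ℂ)⁻¹)^10 + (1-(p:ℂ)⁻¹)^6 * (1+6*(p:ℂ)⁻¹+((p:ℂ)⁻¹)^2)) / (1+(p:ℂ)⁻¹)
    = (1 - 1 / (p : ℂ)) ^ 10 / (1 + 1 / (p : ℂ)) *
        ((((1 + (p : ℂ) ^ (-(1 / 2) : ℂ)) ^ 4)⁻¹ +
            ((1 - (p : ℂ) ^ (-(1 / 2) : ℂ)) ^ 4)⁻¹) / 2 + 1 / (p : ℂ)) := by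
  have hc2 : ((p : ℂ) ^ (-(1/2) : ℂ))^2 = (p : ℂ)⁻¹ := cpow_half_sq (by omega)
  have hcr : (((p:ℝ) ^ (-(1/2) : ℝ) : ℝ) : ℂ) = (p : ℂ) ^ (-(1/2) : ℂ) := by
    rw [Complex.ofReal_cpow (by positivity)]
    norm_num
  set pr : ℝ := (p:ℝ) ^ (-(1/2) : ℝ) with hpr
  have hpr0 : 0 < pr := Real.rpow_pos_of_pos (by positivity) _
  have hpr1 : pr < 1 := by
    apply Real.rpow_lt_one_of_one_lt_of_neg
    · exact_mod_cast (by omega : 1 < p)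
    · norm_num
  set c : ℂ := (p : ℂ) ^ (-(1/2) : ℂ) with hcdef
  have hc0 : c ≠ 0 := by rw [← hcr]; exact Complex.ofReal_ne_zero.mpr hpr0.ne'
  have hcp : (1 : ℂ) + c ≠ 0 := by
    rw [← hcr, show (1:ℂ) + (pr:ℂ) = ((1+pr : ℝ) : ℂ) by push_cast; ring]
    exact Complex.ofReal_ne_zero.mpr (by linarith)
  have hcm : (1 : ℂ) - c ≠ 0 := by
    rw [← hcr, show (1:ℂ) - (pr:ℂ) = ((1-pr : ℝ) : ℂ) by push_cast; ring]
    exact Complex.ofReal_ne_zero.mpr (by linarith)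
  have hcs : (1 : ℂ) + c^2 ≠ 0 := by
    rw [← hcr, show (1:ℂ) + ((pr:ℂ))^2 = ((1+pr^2 : ℝ) : ℂ) by push_cast; ring]
    exact Complex.ofReal_ne_zero.mpr (by nlinarith)
  have hE : (1 : ℂ) - c^2 ≠ 0 := by
    rw [show (1:ℂ) - c^2 = (1-c)*(1+c) by ring]
    exact mul_ne_zero hcm hcp
  have i1 : ((1+c)^4)⁻¹ = (1-c)^4 / (1-c^2)^4 := by
    rw [inv_eq_one_div, div_eq_div_iff (pow_ne_zero 4 hcp) (pow_ne_zero 4 hE)]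
    ring
  have j1 : ((1-c)^4)⁻¹ = (1+c)^4 / (1-c^2)^4 := by
    rw [inv_eq_one_div, div_eq_div_iff (pow_ne_zero 4 hcm) (pow_ne_zero 4 hE)]
    ring
  have comb : ∀ (a b d : ℂ), b ≠ 0 → a/b + d = (a + d*b)/b := by
    intro a b d hb; field_simp
  have hM : ((1:ℂ)-c^2)^4 * 2 ≠ 0 := mul_ne_zero (pow_ne_zero 4 hE) two_ne_zero
  simp only [one_div]
  rw [← hc2, i1, j1, ← add_div, div_div, comb _ _ _ hM, div_mul_div_comm,
    div_eq_div_iff hcs (mul_ne_zero hcs hM)]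
  ring

lemma target1_ofReal (p : ℕ) :
    (1 - 1 / (p : ℂ)) ^ 7 *
        (1 + 7 / (p : ℂ) - 2 / (p : ℂ) ^ 2 + 3 / (p : ℂ) ^ 3 - 1 / (p : ℂ) ^ 4)
    = (((1 - (p:ℝ)⁻¹)^7 * (1 + 7*(p:ℝ)⁻¹ - 2*(p:ℝ)⁻¹^2 + 3*(p:ℝ)⁻¹^3 - (p:ℝ)⁻¹^4) : ℝ) : ℂ) := by
  push_cast
  ring

lemma R2_ofReal (p : ℕ) :
    ((p:ℂ)⁻¹ * (1-(p:ℂ)⁻¹)^10 + (1-(p:ℂ)⁻¹)^6 * (1+6*(p:ℂ)⁻¹+((p:ℂ)⁻¹)^2)) / (1+(p:ℂ)⁻¹)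
    = ((((p:ℝ)⁻¹ * (1-(p:ℝ)⁻¹)^10 + (1-(p:ℝ)⁻¹)^6 * (1+6*(p:ℝ)⁻¹+((p:ℝ)⁻¹)^2)) / (1+(p:ℝ)⁻¹) : ℝ) : ℂ) := by
  push_cast
  ring

lemma F1_bound {r : ℝ} (h0 : 0 ≤ r) (h1 : r ≤ 1) :
    |(1 - r)^7 * (1 + 7*r - 2*r^2 + 3*r^3 - r^4) - 1| ≤ 1537 * r^2 := by
  have key : (1 - r)^7 * (1 + 7*r - 2*r^2 + 3*r^3 - r^4) - 1
      = r^2 * (-30 + 129*r - 274*r^2 + 364*r^3 - 336*r^4 + 230*r^5 - 119*r^6 + 44*r^7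
          - 10*r^8 + r^9) := by ring
  rw [key, abs_mul, abs_pow, abs_of_nonneg h0]
  rw [mul_comm (1537 : ℝ) (r^2)]
  apply mul_le_mul_of_nonneg_left _ (by positivity)
  have hp : ∀ n : ℕ, r^n ≤ 1 := fun n => pow_le_one₀ h0 h1
  have hn : ∀ n : ℕ, 0 ≤ r^n := fun n => pow_nonneg h0 n
  rw [abs_le]
  constructor <;>
    nlinarith [hp 1, hp 2, hp 3, hp 4, hp 5, hp 6, hp 7, hp 8, hp 9,
      hn 1, hn 2, hn 3, hn 4, hn 5, hn 6, hn 7, hn 8, hn 9]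

lemma F2_bound {r : ℝ} (h0 : 0 ≤ r) (h1 : r ≤ 1) :
    |(r * (1-r)^10 + (1-r)^6 * (1+6*r+r^2)) / (1+r) - 1| ≤ 1537 * r^2 := by
  have hd : (0:ℝ) < 1 + r := by linarith
  have key : (r * (1-r)^10 + (1-r)^6 * (1+6*r+r^2)) / (1+r) - 1
      = r^2 * ((-30 + 109*r - 210*r^2 + 274*r^3 - 272*r^4 + 210*r^5 - 119*r^6 + 45*r^7
          - 10*r^8 + r^9) / (1+r)) := by
    field_simp
    ring
  rw [key, abs_mul, abs_pow, abs_of_nonneg h0, mul_comm (1537 : ℝ) (r^2)]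
  apply mul_le_mul_of_nonneg_left _ (by positivity)
  rw [abs_div, abs_of_pos hd, div_le_iff₀ hd]
  have hp : ∀ n : ℕ, r^n ≤ 1 := fun n => pow_le_one₀ h0 h1
  have hn : ∀ n : ℕ, 0 ≤ r^n := fun n => pow_nonneg h0 n
  have habs : |(-30 + 109*r - 210*r^2 + 274*r^3 - 272*r^4 + 210*r^5 - 119*r^6 + 45*r^7
      - 10*r^8 + r^9 : ℝ)| ≤ 1280 := by
    rw [abs_le]
    constructor <;>
      nlinarith [hp 1, hp 2, hp 3, hp 4, hp 5, hp 6, hp 7, hp 8, hp 9,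
        hn 1, hn 2, hn 3, hn 4, hn 5, hn 6, hn 7, hn 8, hn 9]
  nlinarith [habs]

lemma F1_pos {r : ℝ} (h0 : 0 ≤ r) (h1 : r ≤ 1/3) :
    0 < (1 - r)^7 * (1 + 7*r - 2*r^2 + 3*r^3 - r^4) := by
  have := pow_le_one₀ h0 (by linarith : r ≤ 1) (n := 4)
  have h2 : 0 < (1 - r) := by linarith
  have h4 : 0 ≤ r^3 := by positivity
  apply mul_pos (by positivity)
  nlinarith [sq_nonneg r, pow_le_one₀ h0 (by linarith : r ≤ 1) (n := 2)]

lemma F2_pos {r : ℝ} (h0 : 0 ≤ r) (h1 : r ≤ 1/3) :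
    0 < (r * (1-r)^10 + (1-r)^6 * (1+6*r+r^2)) / (1+r) := by
  have h2 : 0 < (1 - r) := by linarith
  apply div_pos _ (by linarith)
  have := mul_nonneg h0 (pow_nonneg h2.le 10)
  nlinarith [pow_pos h2 6, sq_nonneg r]

abbrev OddPrimes := {p : ℕ // p.Prime ∧ p ≠ 2}

lemma oddprime_three_le (p : OddPrimes) : 3 ≤ p.1 := by
  have h := p.2.1.two_le
  have h2 := p.2.2
  omega

lemma summable_invsq : Summable (fun p : OddPrimes => ((p.1 : ℝ)⁻¹)^2) := by
  have h : Summable (fun n : ℕ => ((n : ℝ)⁻¹)^2) := by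
    have := Real.summable_one_div_nat_pow.mpr (le_refl 2)
    simpa [one_div, inv_pow] using this
  exact h.comp_injective Subtype.val_injective

lemma mult_aux {f : OddPrimes → ℂ} (hne : ∀ p, f p ≠ 0)
    (hb : ∀ p : OddPrimes, 57 ≤ p.1 → ‖f p - 1‖ ≤ 1537 * ((p.1 : ℝ)⁻¹)^2) :
    Multipliable f := by
  apply Complex.multipliable_of_summable_log
  apply Summable.of_norm_bounded_eventually (g := fun p : OddPrimes => (3/2) * (1537 * ((p.1 : ℝ)⁻¹)^2))
    ((summable_invsq.mul_left 1537).mul_left (3/2))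
  rw [Filter.eventually_cofinite]
  apply Set.Finite.subset ((Set.finite_Iio 57).preimage (Subtype.val_injective.injOn))
  intro p hp
  simp only [Set.mem_setOf_eq, not_le] at hp
  simp only [Set.mem_preimage, Set.mem_Iio]
  by_contra hge
  push_neg at hge
  have hge' : (57 : ℝ) ≤ (p.1 : ℝ) := by exact_mod_cast hge
  have hbp := hb p hge
  have hhalf : ‖f p - 1‖ ≤ 1/2 := by
    refine hbp.trans ?_
    have : ((p.1 : ℝ)⁻¹)^2 ≤ (57⁻¹ : ℝ)^2 := by
      apply pow_le_pow_left₀ (by positivity)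
      exact inv_anti₀ (by norm_num) hge'
    nlinarith
  have hcalc : ‖Complex.log (f p)‖ ≤ 3/2 * (1537 * ((p.1 : ℝ)⁻¹)^2) := by
    calc ‖Complex.log (f p)‖ = ‖Complex.log (1 + (f p - 1))‖ := by rw [add_sub_cancel]
      _ ≤ 3/2 * ‖f p - 1‖ := Complex.norm_log_one_add_half_le_self hhalf
      _ ≤ 3/2 * (1537 * ((p.1 : ℝ)⁻¹)^2) := by nlinarith [norm_nonneg (f p - 1)]
  linarith

lemma oddprime_r_facts (p : OddPrimes) :
    0 ≤ ((p.1 : ℝ))⁻¹ ∧ ((p.1 : ℝ))⁻¹ ≤ 1/3 := by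
  have h3 : (3 : ℝ) ≤ (p.1 : ℝ) := by exact_mod_cast oddprime_three_le p
  constructor
  · positivity
  · rw [show (1/3 : ℝ) = (3:ℝ)⁻¹ by norm_num]
    exact inv_anti₀ (by norm_num) h3

lemma mult_target1 :
    Multipliable (fun p : OddPrimes =>
      (1 - 1 / (p.1 : ℂ)) ^ 7 *
        (1 + 7 / (p.1 : ℂ) - 2 / (p.1 : ℂ) ^ 2 + 3 / (p.1 : ℂ) ^ 3 - 1 / (p.1 : ℂ) ^ 4)) := by
  apply mult_aux
  · intro p
    obtain ⟨h0, h13⟩ := oddprime_r_facts p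
    rw [target1_ofReal]
    exact Complex.ofReal_ne_zero.mpr (F1_pos h0 h13).ne'
  · intro p _
    obtain ⟨h0, h13⟩ := oddprime_r_facts p
    rw [target1_ofReal, show ((((1 - (p.1:ℝ)⁻¹)^7 * (1 + 7*(p.1:ℝ)⁻¹ - 2*(p.1:ℝ)⁻¹^2
        + 3*(p.1:ℝ)⁻¹^3 - (p.1:ℝ)⁻¹^4) : ℝ)) : ℂ) - 1
      = ((((1 - (p.1:ℝ)⁻¹)^7 * (1 + 7*(p.1:ℝ)⁻¹ - 2*(p.1:ℝ)⁻¹^2 + 3*(p.1:ℝ)⁻¹^3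
        - (p.1:ℝ)⁻¹^4) - 1 : ℝ)) : ℂ) by push_cast; ring, Complex.norm_real,
      Real.norm_eq_abs]
    exact F1_bound h0 (by linarith)

lemma mult_R2 :
    Multipliable (fun p : OddPrimes =>
      ((p.1:ℂ)⁻¹ * (1-(p.1:ℂ)⁻¹)^10 + (1-(p.1:ℂ)⁻¹)^6 * (1+6*(p.1:ℂ)⁻¹+((p.1:ℂ)⁻¹)^2))
        / (1+(p.1:ℂ)⁻¹)) := by
  apply mult_aux
  · intro p
    obtain ⟨h0, h13⟩ := oddprime_r_facts p
    rw [R2_ofReal]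
    exact Complex.ofReal_ne_zero.mpr (F2_pos h0 h13).ne'
  · intro p _
    obtain ⟨h0, h13⟩ := oddprime_r_facts p
    rw [R2_ofReal, show (((((p.1:ℝ)⁻¹ * (1-(p.1:ℝ)⁻¹)^10 + (1-(p.1:ℝ)⁻¹)^6
        * (1+6*(p.1:ℝ)⁻¹+((p.1:ℝ)⁻¹)^2)) / (1+(p.1:ℝ)⁻¹) : ℝ)) : ℂ) - 1
      = (((((p.1:ℝ)⁻¹ * (1-(p.1:ℝ)⁻¹)^10 + (1-(p.1:ℝ)⁻¹)^6
        * (1+6*(p.1:ℝ)⁻¹+((p.1:ℝ)⁻¹)^2)) / (1+(p.1:ℝ)⁻¹) - 1 : ℝ)) : ℂ)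
        by push_cast; ring, Complex.norm_real, Real.norm_eq_abs]
    exact F2_bound h0 (by linarith)

theorem H_at_half :
    Multipliable (fun p : {p : ℕ // p.Prime ∧ p ≠ 2} => Hfactor g1fun (fun _ => 1 / 2) p.1) ∧
    Multipliable (fun p : {p : ℕ // p.Prime ∧ p ≠ 2} => Hfactor g2fun (fun _ => 1 / 2) p.1) ∧
    Multipliable (fun p : {p : ℕ // p.Prime ∧ p ≠ 2} =>
      (1 - 1 / (p.1 : ℂ)) ^ 7 *
        (1 + 7 / (p.1 : ℂ) - 2 / (p.1 : ℂ) ^ 2 + 3 / (p.1 : ℂ) ^ 3 - 1 / (p.1 : ℂ) ^ 4)) ∧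
    Multipliable (fun p : {p : ℕ // p.Prime ∧ p ≠ 2} =>
      (1 - 1 / (p.1 : ℂ)) ^ 10 / (1 + 1 / (p.1 : ℂ)) *
        ((((1 + (p.1 : ℂ) ^ (-(1 / 2) : ℂ)) ^ 4)⁻¹ +
            ((1 - (p.1 : ℂ) ^ (-(1 / 2) : ℂ)) ^ 4)⁻¹) / 2 + 1 / (p.1 : ℂ))) ∧
    H1 (fun _ => 1 / 2) =
      (∏' p : {p : ℕ // p.Prime ∧ p ≠ 2},
        (1 - 1 / (p.1 : ℂ)) ^ 7 *
          (1 + 7 / (p.1 : ℂ) - 2 / (p.1 : ℂ) ^ 2 + 3 / (p.1 : ℂ) ^ 3 - 1 / (p.1 : ℂ) ^ 4)) ∧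
    H2 (fun _ => 1 / 2) =
      ∏' p : {p : ℕ // p.Prime ∧ p ≠ 2},
        (1 - 1 / (p.1 : ℂ)) ^ 10 / (1 + 1 / (p.1 : ℂ)) *
          ((((1 + (p.1 : ℂ) ^ (-(1 / 2) : ℂ)) ^ 4)⁻¹ +
              ((1 - (p.1 : ℂ) ^ (-(1 / 2) : ℂ)) ^ 4)⁻¹) / 2 + 1 / (p.1 : ℂ)) := by
  refine ⟨?_, ?_, mult_target1, ?_, ?_, ?_⟩
  · exact mult_target1.congr fun p => (target1_eval (oddprime_three_le p)).symm
  · exact mult_R2.congr fun p => (R2_eval (oddprime_three_le p)).symm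
  · exact mult_R2.congr fun p => target2_eval (oddprime_three_le p)
  · exact tprod_congr fun p => target1_eval (oddprime_three_le p)
  · exact tprod_congr fun p =>
      (R2_eval (oddprime_three_le p)).trans (target2_eval (oddprime_three_le p))
end
end

section
/- Let k₁ be a nonzero squarefree integer, let a be an odd positive integer, let u ∈ ℂ⁴ with Re(uᵢ) > 1/2 for each i, and let s ∈ ℂ with Re(s) > 1 (so that all series below converge absolutely). Define Z(u, s; k₁, a) := Σ_{k₂ ≥ 1} k₂^{−2s} Σ over quadruples (n₁,n₂,n₃,n₄) of positive integers with n₁n₂n₃n₄ coprime to 2a of n₁^{−u₁} n₂^{−u₂} n₃^{−u₃} n₄^{−u₄} · G_{k₁k₂²}(n₁n₂n₃n₄)/(n₁n₂n₃n₄), and Z*(u, s; k₁, a) to be the same double sum with the extra factor (−1)^{k₂}. Then Z*(u, s; k₁, a) = (2^{1−2s} − 1) · Z(u, s; k₁, a). -/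
open Real
open scoped Classical

noncomputable section

/-- The Gauss-type sum `G_k(n)` for odd positive `n`:
`G_k(n) = ((1-i)/2 + (-1/n)(1+i)/2) Σ_{a mod n} (a/n) e(ak/n)`. -/
def gaussG (k : ℤ) (n : ℕ) : ℂ :=
  ((1 - Complex.I) / 2 + (jacobiSym (-1) n : ℂ) * (1 + Complex.I) / 2) *
    ∑ a ∈ Finset.range n,
      (jacobiSym (a : ℤ) n : ℂ) *
        Complex.exp (2 * (π : ℂ) * Complex.I * (a : ℂ) * (k : ℂ) / (n : ℂ))

/-- The multiple Dirichlet series `Z(u, s; k₁, a)`. -/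
def Zser (u : Fin 4 → ℂ) (s : ℂ) (k₁ : ℤ) (a : ℕ) : ℂ :=
  ∑' k₂ : ℕ,
    if 1 ≤ k₂ then
      (k₂ : ℂ) ^ (-(2 * s)) *
        ∑' n : Fin 4 → ℕ,
          (if (∀ i, 0 < n i) ∧ Nat.Coprime (n 0 * n 1 * n 2 * n 3) (2 * a) then
            (∏ i, ((n i : ℕ) : ℂ) ^ (-u i)) *
              gaussG (k₁ * (k₂ : ℤ) ^ 2) (n 0 * n 1 * n 2 * n 3) /
                ((n 0 * n 1 * n 2 * n 3 : ℕ) : ℂ)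
          else 0)
    else 0

/-- The multiple Dirichlet series `Z*(u, s; k₁, a)`, with the extra factor `(-1)^{k₂}`. -/
def Zstar (u : Fin 4 → ℂ) (s : ℂ) (k₁ : ℤ) (a : ℕ) : ℂ :=
  ∑' k₂ : ℕ,
    if 1 ≤ k₂ then
      (-1 : ℂ) ^ k₂ * (k₂ : ℂ) ^ (-(2 * s)) *
        ∑' n : Fin 4 → ℕ,
          (if (∀ i, 0 < n i) ∧ Nat.Coprime (n 0 * n 1 * n 2 * n 3) (2 * a) then
            (∏ i, ((n i : ℕ) : ℂ) ^ (-u i)) *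
              gaussG (k₁ * (k₂ : ℤ) ^ 2) (n 0 * n 1 * n 2 * n 3) /
                ((n 0 * n 1 * n 2 * n 3 : ℕ) : ℂ)
          else 0)
    else 0


/-- periodicity of the exponential in `a` modulo `N`. -/
lemma exp_mod_congr {N : ℕ} (hN : 0 < N) (k : ℤ) {a b : ℕ} (h : a ≡ b [MOD N]) :
    Complex.exp (2 * (π : ℂ) * Complex.I * (a : ℂ) * (k : ℂ) / (N : ℂ)) =
      Complex.exp (2 * (π : ℂ) * Complex.I * (b : ℂ) * (k : ℂ) / (N : ℂ)) := by
  have hNc : (N : ℂ) ≠ 0 := Nat.cast_ne_zero.mpr hN.ne'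
  obtain ⟨t, ht⟩ := h.dvd  -- (N:ℤ) ∣ (b:ℤ) - a
  have hb : (b : ℂ) = (a : ℂ) + (N : ℂ) * (t : ℂ) := by
    have : (b : ℤ) = a + N * t := by linarith [ht]
    exact_mod_cast congrArg (fun z : ℤ => (z : ℂ)) this
  have : 2 * (π : ℂ) * Complex.I * (b : ℂ) * (k : ℂ) / (N : ℂ) =
      2 * (π : ℂ) * Complex.I * (a : ℂ) * (k : ℂ) / (N : ℂ) +
        ((t * k : ℤ) : ℂ) * (2 * (π : ℂ) * Complex.I) := by
    field_simp [hb]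
    rw [hb]; push_cast; ring
  rw [this, Complex.exp_add, Complex.exp_int_mul_two_pi_mul_I, mul_one]

lemma sum_range_eq_sum_zmod {N : ℕ} [NeZero N] (F : ℕ → ℂ) :
    ∑ a ∈ Finset.range N, F a = ∑ x : ZMod N, F x.val := by
  refine Finset.sum_nbij' (fun a => (a : ZMod N)) (fun x => x.val) ?_ ?_ ?_ ?_ ?_
  · intro a _; exact Finset.mem_univ _
  · intro x _; exact Finset.mem_range.mpr (ZMod.val_lt x)
  · intro a ha; exact ZMod.val_cast_of_lt (Finset.mem_range.mp ha)
  · intro x _; exact ZMod.natCast_rightInverse x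
  · intro a ha; rw [ZMod.val_cast_of_lt (Finset.mem_range.mp ha)]

lemma gaussG_four_mul {N : ℕ} (hN : 0 < N) (hodd : Nat.Coprime 2 N) (k : ℤ) :
    gaussG (4 * k) N = gaussG k N := by
  have : NeZero N := ⟨hN.ne'⟩
  unfold gaussG
  congr 1
  rw [sum_range_eq_sum_zmod, sum_range_eq_sum_zmod]
  have hcop4 : Nat.Coprime 4 N := by
    have : (4 : ℕ) = 2 * 2 := rfl
    rw [this]; exact Nat.Coprime.mul hodd hodd
  have hu : IsUnit ((4 : ℕ) : ZMod N) := (ZMod.isUnit_iff_coprime 4 N).mpr hcop4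
  refine Fintype.sum_bijective (fun x : ZMod N => ((4 : ℕ) : ZMod N) * x)
    (IsUnit.isUnit_iff_mulLeft_bijective.mp hu) _ _ ?_
  intro x
  have hmod : (((4 : ℕ) : ZMod N) * x).val ≡ 4 * x.val [MOD N] := by
    rw [ZMod.val_mul, ZMod.val_natCast]
    exact (Nat.mod_modEq _ N).trans ((Nat.mod_modEq 4 N).mul_right x.val)
  have hjac : (jacobiSym ((((4 : ℕ) : ZMod N) * x).val : ℤ) N : ℂ) =
      (jacobiSym (x.val : ℤ) N : ℂ) := by
    have h1 : jacobiSym ((((4 : ℕ) : ZMod N) * x).val : ℤ) N =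
        jacobiSym ((4 * x.val : ℕ) : ℤ) N := by
      apply jacobiSym.mod_left'
      have := hmod
      unfold Nat.ModEq at this
      exact_mod_cast congrArg (fun z : ℕ => (z : ℤ)) this
    have h4 : jacobiSym (4 : ℤ) N = 1 := by
      have : ((2 : ℤ)).gcd N = 1 := by
        have := hodd
        simpa [Int.gcd, Nat.Coprime] using this
      calc jacobiSym (4 : ℤ) N = jacobiSym ((2:ℤ)^2) N := by norm_num
        _ = 1 := jacobiSym.sq_one' this
    rw [h1]
    push_cast
    rw [jacobiSym.mul_left, h4, one_mul]
  have hexp : Complex.exp (2 * (π : ℂ) * Complex.I * ((((4 : ℕ) : ZMod N) * x).val : ℂ)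
        * (k : ℂ) / (N : ℂ)) =
      Complex.exp (2 * (π : ℂ) * Complex.I * (x.val : ℂ) * ((4 * k : ℤ) : ℂ) / (N : ℂ)) := by
    rw [exp_mod_congr hN k hmod]
    congr 1
    push_cast
    ring
  rw [hjac, hexp]

/-- inner sum defn. -/
private def Tfun (u : Fin 4 → ℂ) (k₁ : ℤ) (a : ℕ) (k₂ : ℕ) : ℂ :=
  ∑' n : Fin 4 → ℕ,
    (if (∀ i, 0 < n i) ∧ Nat.Coprime (n 0 * n 1 * n 2 * n 3) (2 * a) then
      (∏ i, ((n i : ℕ) : ℂ) ^ (-u i)) *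
        gaussG (k₁ * (k₂ : ℤ) ^ 2) (n 0 * n 1 * n 2 * n 3) /
          ((n 0 * n 1 * n 2 * n 3 : ℕ) : ℂ)
    else 0)

private def fF (u : Fin 4 → ℂ) (s : ℂ) (k₁ : ℤ) (a : ℕ) (k₂ : ℕ) : ℂ :=
  if 1 ≤ k₂ then (k₂ : ℂ) ^ (-(2 * s)) * Tfun u k₁ a k₂ else 0

private lemma Zser_eq (u : Fin 4 → ℂ) (s : ℂ) (k₁ : ℤ) (a : ℕ) :
    Zser u s k₁ a = ∑' k, fF u s k₁ a k := rfl

private lemma Zstar_eq (u : Fin 4 → ℂ) (s : ℂ) (k₁ : ℤ) (a : ℕ) :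
    Zstar u s k₁ a = ∑' k, (-1 : ℂ) ^ k * fF u s k₁ a k := by
  unfold Zstar fF Tfun
  apply tsum_congr; intro k
  split_ifs with hk
  · ring
  · exact (mul_zero _).symm

private lemma Tfun_two_mul (u : Fin 4 → ℂ) (k₁ : ℤ) (a m : ℕ) :
    Tfun u k₁ a (2 * m) = Tfun u k₁ a m := by
  unfold Tfun
  apply tsum_congr; intro n
  split_ifs with h
  · obtain ⟨hpos, hcop⟩ := h
    have hN : 0 < n 0 * n 1 * n 2 * n 3 :=
      Nat.mul_pos (Nat.mul_pos (Nat.mul_pos (hpos 0) (hpos 1)) (hpos 2)) (hpos 3)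
    have hodd : Nat.Coprime 2 (n 0 * n 1 * n 2 * n 3) :=
      (Nat.Coprime.coprime_dvd_right ⟨a, rfl⟩ hcop).symm
    have hkey : k₁ * ((2 * m : ℕ) : ℤ) ^ 2 = 4 * (k₁ * (m : ℤ) ^ 2) := by push_cast; ring
    rw [hkey, gaussG_four_mul hN hodd]
  · rfl

private lemma fF_two_mul (u : Fin 4 → ℂ) (s : ℂ) (k₁ : ℤ) (a m : ℕ) :
    fF u s k₁ a (2 * m) = (2 : ℂ) ^ (-(2 * s)) * fF u s k₁ a m := by
  rcases Nat.eq_zero_or_pos m with rfl | hm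
  · simp [fF]
  · have h1 : 1 ≤ 2 * m := by omega
    have h2 : 1 ≤ m := hm
    simp only [fF, if_pos h1, if_pos h2]
    rw [Tfun_two_mul, Nat.cast_mul, Complex.natCast_mul_natCast_cpow]
    push_cast
    ring

theorem Zstar_eq_Z (k₁ : ℤ) (hk₁ : k₁ ≠ 0) (hk₁sf : Squarefree k₁)
    (a : ℕ) (ha : Odd a) (ha' : 0 < a)
    (u : Fin 4 → ℂ) (hu : ∀ i, 1 / 2 < (u i).re) (s : ℂ) (hs : 1 < s.re) :
    Zstar u s k₁ a = ((2 : ℂ) ^ (1 - 2 * s) - 1) * Zser u s k₁ a := by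
  have hnorm : ∀ k, ‖(-1 : ℂ) ^ k * fF u s k₁ a k‖ = ‖fF u s k₁ a k‖ := by
    intro k; rw [norm_mul]; simp
  rw [Zstar_eq, Zser_eq]
  by_cases hsum : Summable (fF u s k₁ a)
  · have hgsum : Summable (fun k => (-1 : ℂ) ^ k * fF u s k₁ a k) := by
      rw [← summable_norm_iff]
      simp only [hnorm]
      exact summable_norm_iff.mpr hsum
    have heven : ∀ k, (-1 : ℂ) ^ k * fF u s k₁ a k + fF u s k₁ a k
        = if Even k then 2 * fF u s k₁ a k else 0 := by
      intro k
      rcases Nat.even_or_odd k with h | h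
      · rw [if_pos h, h.neg_one_pow]; ring
      · rw [if_neg (Nat.not_even_iff_odd.mpr h), h.neg_one_pow]; ring
    have hinj : Function.Injective (fun m : ℕ => 2 * m) := fun x y h => by
      simpa using h
    have hsupp : Function.support (fun x => if Even x then 2 * fF u s k₁ a x else 0)
        ⊆ Set.range (fun m : ℕ => 2 * m) := by
      intro x hx
      by_contra hmem
      apply hx
      show (if Even x then 2 * fF u s k₁ a x else 0) = 0
      rw [if_neg]
      intro hxe
      obtain ⟨c, hc⟩ := hxe
      exact hmem ⟨c, by show 2 * c = x; omega⟩
    have key : (∑' k, (-1 : ℂ) ^ k * fF u s k₁ a k) + (∑' k, fF u s k₁ a k)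
        = 2 * ((2 : ℂ) ^ (-(2 * s)) * ∑' k, fF u s k₁ a k) := by
      rw [← Summable.tsum_add hgsum hsum, tsum_congr heven,
        ← Function.Injective.tsum_eq hinj hsupp]
      have h2 : ∀ m : ℕ, (if Even ((fun m : ℕ => 2 * m) m)
            then 2 * fF u s k₁ a ((fun m : ℕ => 2 * m) m) else 0)
          = 2 * ((2 : ℂ) ^ (-(2 * s)) * fF u s k₁ a m) := by
        intro m
        simp only []
        rw [if_pos (even_two_mul m), fF_two_mul]
      rw [tsum_congr h2, tsum_mul_left, tsum_mul_left]
    have h2exp : (2 : ℂ) ^ (1 - 2 * s) = 2 * (2 : ℂ) ^ (-(2 * s)) := by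
      rw [show (1 : ℂ) - 2 * s = 1 + -(2 * s) by ring,
        Complex.cpow_add _ _ two_ne_zero, Complex.cpow_one]
    rw [h2exp]
    linear_combination key
  · have hnsum : ¬ Summable (fun k => (-1 : ℂ) ^ k * fF u s k₁ a k) := by
      intro hc
      apply hsum
      rw [← summable_norm_iff] at hc ⊢
      simpa only [hnorm] using hc
    rw [tsum_eq_zero_of_not_summable hsum, tsum_eq_zero_of_not_summable hnsum, mul_zero]
end
end

section
/- Let p be an odd prime and let z₁, z₂, z₃, z₄ ∈ ℂ with Re(zᵢ) > −1/2 for each i and Re(z₁) < 1/2. Then 1/p + (1 − 1/p) · B_p(1/2+z₁, 1/2+z₂, 1/2+z₃, 1/2+z₄; 0) + p^{−(1/2−z₁)} (1 − p^{−2z₁}) · B_p(1/2+z₁, 1/2+z₂, 1/2+z₃, 1/2+z₄; 1) − p^{−(2−2z₁)} = (1 − p^{−(1−2z₁)}) · ( 1/p + B_p(1/2−z₁, 1/2+z₂, 1/2+z₃, 1/2+z₄; 0) ). -/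
set_option maxRecDepth 4000
set_option maxHeartbeats 1600000


open scoped Classical

noncomputable section

/-- `Bp p u a` is the sum of `p^{-(n₁u₁+n₂u₂+n₃u₃+n₄u₄)}` over quadruples of nonnegative
integers with `n₁+n₂+n₃+n₄ ≡ a (mod 2)`. -/
def Bp (p : ℕ) (u : Fin 4 → ℂ) (a : ℕ) : ℂ :=
  ∑' n : Fin 4 → ℕ,
    if (∑ i, n i) % 2 = a % 2 then (p : ℂ) ^ (-(∑ i, (n i : ℂ) * u i)) else 0

lemma hasSum_pi_geometric_real (n : ℕ) :
    ∀ (x : Fin n → ℝ), (∀ i, 0 ≤ x i) → (∀ i, x i < 1) →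
      HasSum (fun m : Fin n → ℕ => ∏ i, x i ^ m i) (∏ i, (1 - x i)⁻¹) := by
  induction n with
  | zero =>
      intro x _ _
      have h : HasSum (fun m : Fin 0 → ℕ => ∏ i, x i ^ m i)
          ((fun m : Fin 0 → ℕ => ∏ i, x i ^ m i) default) :=
        hasSum_single default (fun b' hb' => absurd (Subsingleton.elim b' default) hb')
      simpa using h
  | succ n ih =>
      intro x hx0 hx1
      have ihx := ih (fun i => x i.succ) (fun i => hx0 i.succ) (fun i => hx1 i.succ)
      have h0 : HasSum (fun k : ℕ => x 0 ^ k) (1 - x 0)⁻¹ :=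
        hasSum_geometric_of_lt_one (hx0 0) (hx1 0)
      have hsum : Summable (fun q : ℕ × (Fin n → ℕ) =>
          x 0 ^ q.1 * ∏ i, x i.succ ^ q.2 i) :=
        Summable.mul_of_nonneg (f := fun k : ℕ => x 0 ^ k)
          (g := fun m : Fin n → ℕ => ∏ i, x i.succ ^ m i) h0.summable ihx.summable
          (fun k => pow_nonneg (hx0 0) k)
          (fun m => Finset.prod_nonneg fun i _ => pow_nonneg (hx0 i.succ) (m i))
      have hmul : HasSum (fun q : ℕ × (Fin n → ℕ) => x 0 ^ q.1 * ∏ i, x i.succ ^ q.2 i)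
          ((1 - x 0)⁻¹ * ∏ i : Fin n, (1 - x i.succ)⁻¹) :=
        HasSum.mul (f := fun k : ℕ => x 0 ^ k)
          (g := fun m : Fin n → ℕ => ∏ i, x i.succ ^ m i) h0 ihx hsum
      have hcomp : ((fun m : Fin (n+1) → ℕ => ∏ i, x i ^ m i) ∘ (Fin.consEquiv fun _ => ℕ))
          = fun q : ℕ × (Fin n → ℕ) => x 0 ^ q.1 * ∏ i, x i.succ ^ q.2 i := by
        funext q
        simp [Fin.consEquiv, Fin.prod_univ_succ]
      rw [Fin.prod_univ_succ]
      exact (Equiv.hasSum_iff _).mp (by rw [hcomp]; exact hmul)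

lemma hasSum_pi_geometric (n : ℕ) :
    ∀ (x : Fin n → ℂ), (∀ i, ‖x i‖ < 1) →
      HasSum (fun m : Fin n → ℕ => ∏ i, x i ^ m i) (∏ i, (1 - x i)⁻¹) := by
  induction n with
  | zero =>
      intro x _
      have h : HasSum (fun m : Fin 0 → ℕ => ∏ i, x i ^ m i)
          ((fun m : Fin 0 → ℕ => ∏ i, x i ^ m i) default) :=
        hasSum_single default (fun b' hb' => absurd (Subsingleton.elim b' default) hb')
      simpa using h
  | succ n ih =>
      intro x hx
      have ihx := ih (fun i => x i.succ) (fun i => hx i.succ)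
      have h0 : HasSum (fun k : ℕ => x 0 ^ k) (1 - x 0)⁻¹ :=
        hasSum_geometric_of_norm_lt_one (hx 0)
      have hnorm1 : Summable (fun k : ℕ => ‖x 0 ^ k‖) :=
        (summable_geometric_of_lt_one (norm_nonneg (x 0)) (hx 0)).congr
          (fun k => (norm_pow (x 0) k).symm)
      have hnorm2 : Summable (fun m : Fin n → ℕ => ‖∏ i, x i.succ ^ m i‖) :=
        ((hasSum_pi_geometric_real n (fun i => ‖x i.succ‖)
            (fun i => norm_nonneg _) (fun i => hx i.succ)).summable).congr
          (fun m => by simp [norm_prod, norm_pow])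
      have hsum : Summable (fun q : ℕ × (Fin n → ℕ) =>
          x 0 ^ q.1 * ∏ i, x i.succ ^ q.2 i) :=
        summable_mul_of_summable_norm (f := fun k : ℕ => x 0 ^ k)
          (g := fun m : Fin n → ℕ => ∏ i, x i.succ ^ m i) hnorm1 hnorm2
      have hmul : HasSum (fun q : ℕ × (Fin n → ℕ) => x 0 ^ q.1 * ∏ i, x i.succ ^ q.2 i)
          ((1 - x 0)⁻¹ * ∏ i : Fin n, (1 - x i.succ)⁻¹) :=
        HasSum.mul (f := fun k : ℕ => x 0 ^ k)
          (g := fun m : Fin n → ℕ => ∏ i, x i.succ ^ m i) h0 ihx hsum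
      have hcomp : ((fun m : Fin (n+1) → ℕ => ∏ i, x i ^ m i) ∘ (Fin.consEquiv fun _ => ℕ))
          = fun q : ℕ × (Fin n → ℕ) => x 0 ^ q.1 * ∏ i, x i.succ ^ q.2 i := by
        funext q
        simp [Fin.consEquiv, Fin.prod_univ_succ]
      rw [Fin.prod_univ_succ]
      exact (Equiv.hasSum_iff _).mp (by rw [hcomp]; exact hmul)

lemma Bp_pair (p : ℕ) (hp : 1 < p) (u : Fin 4 → ℂ) (hu : ∀ i, 0 < (u i).re) :
    Bp p u 0 = ((∏ i, (1 - (p:ℂ) ^ (-u i))⁻¹) + ∏ i, (1 + (p:ℂ) ^ (-u i))⁻¹) / 2 ∧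
    Bp p u 1 = ((∏ i, (1 - (p:ℂ) ^ (-u i))⁻¹) - ∏ i, (1 + (p:ℂ) ^ (-u i))⁻¹) / 2 := by
  have hp0 : (p : ℂ) ≠ 0 := Nat.cast_ne_zero.mpr (by omega)
  set x : Fin 4 → ℂ := fun i => (p : ℂ) ^ (-u i) with hxdef
  have hx : ∀ i, ‖x i‖ < 1 := by
    intro i
    rw [hxdef]
    rw [Complex.norm_natCast_cpow_of_pos (by omega)]
    exact Real.rpow_lt_one_of_one_lt_of_neg (by exact_mod_cast hp)
      (by simpa [Complex.neg_re] using hu i)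
  have hterm : ∀ n : Fin 4 → ℕ,
      (p : ℂ) ^ (-(∑ i, (n i : ℂ) * u i)) = ∏ i, x i ^ n i := by
    intro n
    rw [Complex.cpow_def_of_ne_zero hp0]
    have harg : Complex.log p * -(∑ i, (n i : ℂ) * u i)
        = ∑ i, (n i : ℂ) * (Complex.log p * -u i) := by
      rw [mul_neg, Finset.mul_sum, ← Finset.sum_neg_distrib]
      exact Finset.sum_congr rfl fun i _ => by ring
    rw [harg, Complex.exp_sum]
    refine Finset.prod_congr rfl fun i _ => ?_
    rw [Complex.exp_nat_mul, ← Complex.cpow_def_of_ne_zero hp0]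
  have hsign : ∀ n : Fin 4 → ℕ,
      ∏ i, (-x i) ^ n i = (-1 : ℂ) ^ (∑ i, n i) * ∏ i, x i ^ n i := by
    intro n
    calc ∏ i, (-x i) ^ n i = ∏ i, ((-1 : ℂ) ^ n i * x i ^ n i) :=
          Finset.prod_congr rfl fun i _ => by rw [← neg_one_mul, mul_pow]
      _ = (-1 : ℂ) ^ (∑ i, n i) * ∏ i, x i ^ n i := by
          rw [Finset.prod_mul_distrib, Finset.prod_pow_eq_pow_sum]
  have hP := hasSum_pi_geometric 4 x hx
  have hQ := hasSum_pi_geometric 4 (fun i => -x i) (fun i => by simpa using hx i)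
  have hQ' : HasSum (fun m : Fin 4 → ℕ => ∏ i, (-x i) ^ m i) (∏ i, (1 + x i)⁻¹) := by
    simpa [sub_neg_eq_add] using hQ
  constructor
  · have e0 : ∀ n : Fin 4 → ℕ,
        (if (∑ i, n i) % 2 = 0 % 2 then (p : ℂ) ^ (-(∑ i, (n i : ℂ) * u i)) else 0)
          = ((∏ i, x i ^ n i) + ∏ i, (-x i) ^ n i) / 2 := by
      intro n
      rw [hsign n]
      rcases Nat.even_or_odd (∑ i, n i) with h | h
      · rw [if_pos (by simpa [Nat.even_iff] using h), hterm n, Even.neg_one_pow h, one_mul]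
        ring
      · rw [if_neg (by simp [Nat.odd_iff.mp h]), Odd.neg_one_pow h, neg_one_mul]
        ring
    have : Bp p u 0 = ∑' n : Fin 4 → ℕ, ((∏ i, x i ^ n i) + ∏ i, (-x i) ^ n i) / 2 :=
      tsum_congr e0
    rw [this, ((hP.add hQ').div_const 2).tsum_eq]
  · have e1 : ∀ n : Fin 4 → ℕ,
        (if (∑ i, n i) % 2 = 1 % 2 then (p : ℂ) ^ (-(∑ i, (n i : ℂ) * u i)) else 0)
          = ((∏ i, x i ^ n i) - ∏ i, (-x i) ^ n i) / 2 := by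
      intro n
      rw [hsign n]
      rcases Nat.even_or_odd (∑ i, n i) with h | h
      · rw [if_neg (by simp [Nat.even_iff.mp h]), Even.neg_one_pow h, one_mul]
        ring
      · rw [if_pos (by simp [Nat.odd_iff.mp h]), hterm n, Odd.neg_one_pow h, neg_one_mul]
        ring
    have : Bp p u 1 = ∑' n : Fin 4 → ℕ, ((∏ i, x i ^ n i) - ∏ i, (-x i) ^ n i) / 2 :=
      tsum_congr e1
    rw [this, ((hP.sub hQ').div_const 2).tsum_eq]

lemma alg (a y A B : ℂ) (ma : 1 - a ≠ 0) (pa : 1 + a ≠ 0)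
    (my : 1 - y ≠ 0) (py : 1 + y ≠ 0) :
    a * y + (1 - a * y) * (((1 - a)⁻¹ * A + (1 + a)⁻¹ * B) / 2) +
        (y - a) * (((1 - a)⁻¹ * A - (1 + a)⁻¹ * B) / 2) - a * (y * (y * y))
      = (1 - y * y) * (a * y + ((1 - y)⁻¹ * A + (1 + y)⁻¹ * B) / 2) := by
  field_simp
  ring

theorem Bp_identity (p : ℕ) (hp : p.Prime) (hp2 : p ≠ 2) (z : Fin 4 → ℂ)
    (hz : ∀ i, -(1 / 2) < (z i).re) (hz0 : (z 0).re < 1 / 2) :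
    1 / (p : ℂ) + (1 - 1 / (p : ℂ)) * Bp p (fun i => 1 / 2 + z i) 0 +
        (p : ℂ) ^ (-(1 / 2 - z 0)) * (1 - (p : ℂ) ^ (-(2 * z 0))) *
          Bp p (fun i => 1 / 2 + z i) 1 -
        (p : ℂ) ^ (-(2 - 2 * z 0)) =
      (1 - (p : ℂ) ^ (-(1 - 2 * z 0))) *
        (1 / (p : ℂ) +
          Bp p (Function.update (fun i => 1 / 2 + z i) 0 (1 / 2 - z 0)) 0) := by
  have hp1 : 1 < p := hp.one_lt
  have hp0 : (p : ℂ) ≠ 0 := Nat.cast_ne_zero.mpr hp.pos.ne'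
  have hlt : ∀ w : ℂ, 0 < w.re → ‖(p : ℂ) ^ (-w)‖ < 1 := by
    intro w hw
    rw [Complex.norm_natCast_cpow_of_pos hp.pos]
    exact Real.rpow_lt_one_of_one_lt_of_neg (by exact_mod_cast hp1)
      (by simpa [Complex.neg_re] using hw)
  have hne : ∀ w : ℂ, 0 < w.re →
      (1 - (p : ℂ) ^ (-w) ≠ 0 ∧ 1 + (p : ℂ) ^ (-w) ≠ 0) := by
    intro w hw
    have h := hlt w hw
    constructor
    · intro hE
      rw [sub_eq_zero] at hE
      rw [← hE] at h
      simp at h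
    · intro hE
      have hE' : (p : ℂ) ^ (-w) = -1 := by linear_combination hE
      rw [hE'] at h
      simp at h
  have hu : ∀ i, 0 < ((fun i => 1 / 2 + z i) i).re := by
    intro i
    have := hz i
    simp only []
    simp
    linarith
  have hu' : ∀ i, 0 < ((Function.update (fun i => 1 / 2 + z i) 0
      (1 / 2 - z 0) : Fin 4 → ℂ) i).re := by
    intro i
    rcases eq_or_ne i 0 with rfl | hi
    · rw [Function.update_self]
      simp
      linarith
    · rw [Function.update_of_ne hi]
      simp
      linarith [hz i]
  obtain ⟨h0, h1⟩ := Bp_pair p hp1 (fun i => 1 / 2 + z i) hu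
  obtain ⟨h0', -⟩ := Bp_pair p hp1
    (Function.update (fun i => 1 / 2 + z i) 0 (1 / 2 - z 0)) hu'
  have e0 : (Function.update (fun i => 1 / 2 + z i) 0 (1 / 2 - z 0) : Fin 4 → ℂ) 0
      = 1 / 2 - z 0 := Function.update_self _ _ _
  have e1 : (Function.update (fun i => 1 / 2 + z i) 0 (1 / 2 - z 0) : Fin 4 → ℂ) 1
      = 1 / 2 + z 1 := Function.update_of_ne (by decide) _ _
  have e2 : (Function.update (fun i => 1 / 2 + z i) 0 (1 / 2 - z 0) : Fin 4 → ℂ) 2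
      = 1 / 2 + z 2 := Function.update_of_ne (by decide) _ _
  have e3 : (Function.update (fun i => 1 / 2 + z i) 0 (1 / 2 - z 0) : Fin 4 → ℂ) 3
      = 1 / 2 + z 3 := Function.update_of_ne (by decide) _ _
  rw [h0, h1, h0']
  beta_reduce
  have cpadd : ∀ a b : ℂ, (p : ℂ) ^ a * (p : ℂ) ^ b = (p : ℂ) ^ (a + b) :=
    fun a b => (Complex.cpow_add a b hp0).symm
  have hy1 : (p : ℂ) ^ (-(1 / 2 + z 0)) * (p : ℂ) ^ (-(1 / 2 - z 0)) = 1 / (p : ℂ) := by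
    rw [cpadd, show -(1 / 2 + z 0) + -(1 / 2 - z 0) = (-1 : ℂ) by ring,
      Complex.cpow_neg_one, one_div]
  have hco : (p : ℂ) ^ (-(1 / 2 - z 0)) * (1 - (p : ℂ) ^ (-(2 * z 0)))
      = (p : ℂ) ^ (-(1 / 2 - z 0)) - (p : ℂ) ^ (-(1 / 2 + z 0)) := by
    rw [mul_sub, mul_one, cpadd, show -(1 / 2 - z 0) + -(2 * z 0) = -(1 / 2 + z 0) by ring]
  have hyy : (p : ℂ) ^ (-(1 - 2 * z 0))
      = (p : ℂ) ^ (-(1 / 2 - z 0)) * (p : ℂ) ^ (-(1 / 2 - z 0)) := by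
    rw [cpadd, show -(1 / 2 - z 0) + -(1 / 2 - z 0) = -(1 - 2 * z 0) by ring]
  have h3 : (p : ℂ) ^ (-(2 - 2 * z 0)) = (p : ℂ) ^ (-(1 / 2 + z 0)) *
      ((p : ℂ) ^ (-(1 / 2 - z 0)) * ((p : ℂ) ^ (-(1 / 2 - z 0)) * (p : ℂ) ^ (-(1 / 2 - z 0)))) := by
    rw [cpadd, cpadd, cpadd,
      show -(1 / 2 - z 0) + (-(1 / 2 - z 0) + -(1 / 2 - z 0)) = -(3/2 - 3 * z 0) by ring,
      show -(1 / 2 + z 0) + -(3/2 - 3 * z 0) = -(2 - 2 * z 0) by ring]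
  have hupd : ∀ i : Fin 3,
      Function.update (fun i => 1 / 2 + z i) 0 (1 / 2 - z 0) i.succ = 1 / 2 + z i.succ :=
    fun i => Function.update_of_ne (Fin.succ_ne_zero i) _ _
  have hm : (∏ i : Fin 4, (1 - (p : ℂ) ^ (-(1 / 2 + z i)))⁻¹)
      = (1 - (p : ℂ) ^ (-(1 / 2 + z 0)))⁻¹ *
        ∏ i : Fin 3, (1 - (p : ℂ) ^ (-(1 / 2 + z i.succ)))⁻¹ :=
    Fin.prod_univ_succ _
  have hq : (∏ i : Fin 4, (1 + (p : ℂ) ^ (-(1 / 2 + z i)))⁻¹)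
      = (1 + (p : ℂ) ^ (-(1 / 2 + z 0)))⁻¹ *
        ∏ i : Fin 3, (1 + (p : ℂ) ^ (-(1 / 2 + z i.succ)))⁻¹ :=
    Fin.prod_univ_succ _
  have hm' : (∏ i : Fin 4,
        (1 - (p : ℂ) ^ (-(Function.update (fun i => 1 / 2 + z i) 0 (1 / 2 - z 0) i)))⁻¹)
      = (1 - (p : ℂ) ^ (-(1 / 2 - z 0)))⁻¹ *
        ∏ i : Fin 3, (1 - (p : ℂ) ^ (-(1 / 2 + z i.succ)))⁻¹ := by
    rw [Fin.prod_univ_succ, Function.update_self]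
    exact congrArg _ (Finset.prod_congr rfl fun i _ => by rw [hupd i])
  have hq' : (∏ i : Fin 4,
        (1 + (p : ℂ) ^ (-(Function.update (fun i => 1 / 2 + z i) 0 (1 / 2 - z 0) i)))⁻¹)
      = (1 + (p : ℂ) ^ (-(1 / 2 - z 0)))⁻¹ *
        ∏ i : Fin 3, (1 + (p : ℂ) ^ (-(1 / 2 + z i.succ)))⁻¹ := by
    rw [Fin.prod_univ_succ, Function.update_self]
    exact congrArg _ (Finset.prod_congr rfl fun i _ => by rw [hupd i])
  rw [← hy1, hco, hyy, h3, hm, hq, hm', hq']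
  have hre0 : (0:ℝ) < (1 / 2 + z 0 : ℂ).re := hu 0
  have hre0' : (0:ℝ) < (1 / 2 - z 0 : ℂ).re := by simp; linarith
  obtain ⟨m0, p0⟩ := hne _ hre0
  obtain ⟨m0', p0'⟩ := hne _ hre0'
  linear_combination alg ((p : ℂ) ^ (-(1 / 2 + z 0))) ((p : ℂ) ^ (-(1 / 2 - z 0)))
    (∏ i : Fin 3, (1 - (p : ℂ) ^ (-(1 / 2 + z i.succ)))⁻¹)
    (∏ i : Fin 3, (1 + (p : ℂ) ^ (-(1 / 2 + z i.succ)))⁻¹) m0 p0 m0' p0'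
end
end
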